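/- arXiv:2105.05782 — 10 statements merged into one kernel-verified Lean document; each statement's English description precedes it below -/
import Mathlib

section
/- Let μ ≥ 0 and let S be a nonempty finite set of positive real numbers. Let f : S × S → Bool be any function satisfying the adversarial noise model with parameter μ, i.e., f(x,y) = true whenever (1+μ)·x < y and f(x,y) = false whenever x > (1+μ)·y (f may be arbitrary otherwise). For v ∈ S define Count(v) = |{x ∈ S \ {v} : f(v,x) = false}|. Then every u ∈ S that maximizes Count over S satisfies u ≥ (max S)/(1+μ)². -/
/-- **Count-Max under adversarial noise (Lemma 1).**
Let `μ ≥ 0` and `S` a nonempty finite set of positive reals. If `f` is a comparison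
function satisfying the adversarial noise model with parameter `μ`, and
`Count v = |{x ∈ S \ {v} : f v x = false}|`, then every maximizer `u` of `Count`
satisfies `u ≥ (max S) / (1+μ)^2`. -/
theorem stmt_0 (μ : ℝ) (hμ : 0 ≤ μ) (S : Finset ℝ) (hS : S.Nonempty)
    (hpos : ∀ x ∈ S, 0 < x)
    (f : ℝ → ℝ → Bool)
    (hf_true : ∀ x ∈ S, ∀ y ∈ S, (1 + μ) * x < y → f x y = true)
    (hf_false : ∀ x ∈ S, ∀ y ∈ S, (1 + μ) * y < x → f x y = false)
    (u : ℝ) (hu : u ∈ S)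
    (hmax : ∀ v ∈ S,
      ((S.erase v).filter (fun x => f v x = false)).card ≤
        ((S.erase u).filter (fun x => f u x = false)).card) :
    S.max' hS / (1 + μ) ^ 2 ≤ u := by
  by_contra h
  push_neg at h
  set m := S.max' hS with hm
  have hmS : m ∈ S := S.max'_mem hS
  have h1 : (0:ℝ) < 1 + μ := by linarith
  have hupos := hpos u hu
  rw [lt_div_iff₀ (by positivity)] at h
  have hkey : (1 + μ) ^ 2 * u < m := by nlinarith
  have hum : u < m := by nlinarith [mul_nonneg (mul_nonneg hupos.le hμ) hμ, mul_nonneg hupos.le hμ]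
  set A := (S.erase u).filter (fun x => f u x = false) with hA
  set B := (S.erase m).filter (fun x => f m x = false) with hB
  have huA : u ∉ A := by simp [hA]
  have hsub : insert u A ⊆ B := by
    intro x hx
    rcases Finset.mem_insert.mp hx with rfl | hxA
    · refine Finset.mem_filter.mpr ⟨Finset.mem_erase.mpr ⟨ne_of_lt hum, hu⟩, ?_⟩
      exact hf_false m hmS x hu (by nlinarith)
    · rw [hA, Finset.mem_filter, Finset.mem_erase] at hxA
      obtain ⟨⟨hxu, hxS⟩, hfux⟩ := hxA
      have hxpos := hpos x hxS
      have hxle : x ≤ (1 + μ) * u := by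
        by_contra hc
        push_neg at hc
        have := hf_true u hu x hxS hc
        simp [this] at hfux
      have hxm : (1 + μ) * x < m := by nlinarith
      refine Finset.mem_filter.mpr ⟨Finset.mem_erase.mpr ⟨?_, hxS⟩, ?_⟩
      · intro hxm'; subst hxm'; nlinarith
      · exact hf_false m hmS x hxS hxm
  have hcard : A.card < B.card := by
    calc A.card < (insert u A).card := by rw [Finset.card_insert_of_notMem huA]; omega
    _ ≤ B.card := Finset.card_le_card hsub
  exact Nat.lt_irrefl _ (lt_of_lt_of_le hcard (hmax m hmS))
end

section
/- Let (X,d) be a metric space, u ∈ X, and let μ ≥ 0 and S ⊆ X be a nonempty finite set of candidate centers. Let g : S × S → Bool be any function satisfying the adversarial noise model with parameter μ for comparing distances to u, i.e., g(s,s') = true whenever (1+μ)·d(u,s) < d(u,s') and g(s,s') = false whenever d(u,s) > (1+μ)·d(u,s') (g may be arbitrary otherwise). For s ∈ S define MCount(s) = |{s' ∈ S \ {s} : g(s,s') = true}|. Then every s* ∈ S that maximizes MCount over S satisfies d(u,s*) ≤ (1+μ)² · min_{s ∈ S} d(u,s). -/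
/-- **MCount assignment guarantee under adversarial noise.**
Let `u` be a point of a metric space, `S` a nonempty finite set of candidate centers and
`g` a comparator satisfying the adversarial noise model with parameter `μ` for comparing
distances to `u`. With `MCount s = |{s' ∈ S \ {s} : g s s' = true}|`, every maximizer
`s*` of `MCount` satisfies `d(u, s*) ≤ (1+μ)^2 · min_{s ∈ S} d(u, s)`. -/
theorem stmt_2 {X : Type*} [MetricSpace X] [DecidableEq X] (u : X) (μ : ℝ) (hμ : 0 ≤ μ)
    (S : Finset X) (hS : S.Nonempty)
    (g : X → X → Bool)
    (hg_true : ∀ s ∈ S, ∀ s' ∈ S, (1 + μ) * dist u s < dist u s' → g s s' = true)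
    (hg_false : ∀ s ∈ S, ∀ s' ∈ S, (1 + μ) * dist u s' < dist u s → g s s' = false)
    (sstar : X) (hstar : sstar ∈ S)
    (hmax : ∀ s ∈ S,
      ((S.erase s).filter (fun s' => g s s' = true)).card ≤
        ((S.erase sstar).filter (fun s' => g sstar s' = true)).card) :
    dist u sstar ≤ (1 + μ) ^ 2 * S.inf' hS (fun s => dist u s) := by
  by_contra hcon
  push_neg at hcon
  set d0 := S.inf' hS (fun s => dist u s) with hd0
  obtain ⟨s0, hs0S, hs0⟩ := S.exists_mem_eq_inf' hS (fun s => dist u s)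
  have h1μ : (0:ℝ) < 1 + μ := by linarith
  have hd0eq : d0 = dist u s0 := hs0
  have hd0nn : 0 ≤ d0 := hd0eq ▸ dist_nonneg
  have hbig : (1 + μ) * d0 < dist u sstar := by nlinarith [mul_nonneg (mul_nonneg hμ h1μ.le) hd0nn]
  have hne : sstar ≠ s0 := by
    intro h; rw [h] at hbig; nlinarith
  -- every s' counted by sstar satisfies (1+μ)*d0 < dist u s'
  set T := (S.erase sstar).filter (fun s' => g sstar s' = true) with hT
  have hTsub : ∀ s' ∈ T, (1 + μ) * d0 < dist u s' := by
    intro s' hs'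
    simp only [hT, Finset.mem_filter, Finset.mem_erase] at hs'
    obtain ⟨⟨hne', hmem⟩, hgt⟩ := hs'
    by_contra hle
    push_neg at hle
    have : (1 + μ) * dist u s' < dist u sstar := by nlinarith
    have := hg_false sstar hstar s' hmem this
    rw [hgt] at this; exact absurd this (by simp)
  have hsub : insert sstar T ⊆ (S.erase s0).filter (fun s' => g s0 s' = true) := by
    intro x hx
    rcases Finset.mem_insert.mp hx with rfl | hx
    · refine Finset.mem_filter.mpr ⟨Finset.mem_erase.mpr ⟨hne, hstar⟩, ?_⟩
      exact hg_true s0 hs0S x hstar (by nlinarith)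
    · have hx' := hTsub x hx
      simp only [hT, Finset.mem_filter, Finset.mem_erase] at hx
      obtain ⟨⟨hne', hmem⟩, _⟩ := hx
      refine Finset.mem_filter.mpr ⟨Finset.mem_erase.mpr ⟨?_, hmem⟩, ?_⟩
      · intro h; rw [h] at hx'; nlinarith
      · exact hg_true s0 hs0S x hmem (by nlinarith)
  have hnotin : sstar ∉ T := by
    simp [hT]
  have hcard : T.card + 1 ≤ ((S.erase s0).filter (fun s' => g s0 s' = true)).card := by
    have := Finset.card_le_card hsub
    rwa [Finset.card_insert_of_notMem hnotin] at this
  have := hmax s0 hs0S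
  omega
end

section
/- Let (X,d) be a metric space, V ⊆ X a nonempty finite set of points, S ⊆ X a nonempty finite set of centers, and μ ≥ 0. Suppose π : V → S is an assignment satisfying d(v, π(v)) ≤ (1+μ)² · min_{s ∈ S} d(v,s) for every v ∈ V, and suppose v_j ∈ V satisfies d(v_j, π(v_j)) ≥ (max_{v ∈ V} d(v, π(v)))/(1+μ)³. Then min_{s ∈ S} d(v_j, s) ≥ (max_{v ∈ V} min_{s ∈ S} d(v, s))/(1+μ)⁵. -/
/-- **Approximate farthest point from approximate assignment (Lemma: k-center, adversarial).**
If `π` assigns every point of `V` to a center in `S` whose distance is within a factor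
`(1+μ)^2` of the nearest-center distance, and `v_j` is a point whose assigned distance is
within a factor `(1+μ)^3` of the maximum assigned distance, then the true nearest-center
distance of `v_j` is within a factor `(1+μ)^5` of the maximum over `V` of the
nearest-center distance. -/
theorem stmt_3 {X : Type*} [MetricSpace X]
    (V S : Finset X) (hV : V.Nonempty) (hS : S.Nonempty)
    (μ : ℝ) (hμ : 0 ≤ μ)
    (π : X → X) (hπ : ∀ v ∈ V, π v ∈ S)
    (hassign : ∀ v ∈ V, dist v (π v) ≤ (1 + μ) ^ 2 * S.inf' hS (fun s => dist v s))
    (vj : X) (hvj : vj ∈ V)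
    (hfar : V.sup' hV (fun v => dist v (π v)) / (1 + μ) ^ 3 ≤ dist vj (π vj)) :
    V.sup' hV (fun v => S.inf' hS (fun s => dist v s)) / (1 + μ) ^ 5 ≤
      S.inf' hS (fun s => dist vj s) := by
  have h1 : (0:ℝ) < 1 + μ := by linarith
  rw [div_le_iff₀ (by positivity)]
  rw [Finset.sup'_le_iff]
  intro v hv
  have hA : S.inf' hS (fun s => dist v s) ≤ dist v (π v) :=
    Finset.inf'_le _ (hπ v hv)
  have hB : dist v (π v) ≤ V.sup' hV (fun v => dist v (π v)) :=
    Finset.le_sup' (fun w => dist w (π w)) hv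
  have hC : V.sup' hV (fun v => dist v (π v)) ≤ (1 + μ) ^ 3 * dist vj (π vj) := by
    rw [div_le_iff₀ (by positivity)] at hfar
    linarith [hfar]
  have hD := hassign vj hvj
  calc S.inf' hS (fun s => dist v s) ≤ (1 + μ) ^ 3 * ((1 + μ) ^ 2 * S.inf' hS (fun s => dist vj s)) := by
        nlinarith [hC, hD, pow_pos h1 3]
    _ = S.inf' hS (fun s => dist vj s) * (1 + μ) ^ 5 := by ring
end

section
/- Let (X,d) be a metric space, V ⊆ X a nonempty finite set, and 1 ≤ k ≤ |V|. Define OPT = min over subsets U ⊆ V with |U| = k of max_{v ∈ V} min_{u ∈ U} d(v,u). Let α ≥ 1 and β ≥ 1. Suppose s_1, …, s_k ∈ V are distinct points, write S_t = {s_1, …, s_t}, and suppose for each t ∈ {1, …, k} there is an assignment π_t : V → S_t with d(v, π_t(v)) ≤ β · min_{s ∈ S_t} d(v,s) for every v ∈ V, and for each t ∈ {1, …, k−1} the new center satisfies d(s_{t+1}, π_t(s_{t+1})) ≥ (1/α) · max_{v ∈ V} min_{s ∈ S_t} d(v,s). Then max_{v ∈ V} d(v, π_k(v)) ≤ 2·α·β²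 · OPT. -/
/-!
Let `r` be the largest distance from a point of `V` to the `k` greedy centers and let `v` be a
point realising it. The centers `s 0, …, s (k-1)` together with `v` are `k + 1` points of `V` at
pairwise distance at least `r / (α β)`: each new center was at least `1/α` times as far as the
current radius, which only decreases, and the assignment overestimates distances by at most `β`.
Two of these `k + 1` points share a nearest center of an optimal solution, so they are within
`2 OPT` of each other. Hence `r ≤ 2 α β OPT`, and the final assignment costs at most `β r`.
-/

open Finset

section

variable {X : Type*} [PseudoMetricSpace X]

noncomputable def infDistFirst (s : ℕ → X) (t : ℕ) (v : X) : ℝ :=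
  sInf ((fun i => dist v (s i)) '' {i : ℕ | i < t})

noncomputable def kCenterCost (V : Finset X) (hV : V.Nonempty) (U : Finset X) : ℝ :=
  V.sup' hV fun v => sInf ((fun u => dist v u) '' (U : Set X))

lemma bddBelow_image_dist {ι : Type*} (v : X) (s : ι → X) (I : Set ι) :
    BddBelow ((fun i => dist v (s i)) '' I) :=
  ⟨0, by rintro _ ⟨i, -, rfl⟩; exact dist_nonneg⟩

lemma infDistFirst_le_dist {s : ℕ → X} {t i : ℕ} (v : X) (hi : i < t) :
    infDistFirst s t v ≤ dist v (s i) :=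
  csInf_le (bddBelow_image_dist v s _) ⟨i, hi, rfl⟩

lemma infDistFirst_anti {s : ℕ → X} {t t' : ℕ} (v : X) (ht : 1 ≤ t) (htt' : t ≤ t') :
    infDistFirst s t' v ≤ infDistFirst s t v :=
  csInf_le_csInf (bddBelow_image_dist v s _) ⟨_, 0, ht, rfl⟩
    (Set.image_mono fun _ hi => lt_of_lt_of_le hi htt')

lemma sup'_infDistFirst_le_of_farthest (V : Finset X) (hV : V.Nonempty) (s : ℕ → X)
    {α β d : ℝ} (hα : 0 < α) (hβ : 0 ≤ β) {i j k : ℕ} (hij : i < j) (hjk : j ≤ k)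
    (hd : d ≤ β * infDistFirst s j (s j))
    (hfar : d ≥ 1 / α * V.sup' hV (infDistFirst s j)) :
    V.sup' hV (infDistFirst s k) ≤ α * β * dist (s j) (s i) := by
  rw [ge_iff_le, one_div, inv_mul_le_iff₀ hα] at hfar
  calc V.sup' hV (infDistFirst s k)
      ≤ V.sup' hV (infDistFirst s j) :=
        sup'_mono_fun fun v _ => infDistFirst_anti v (by omega) hjk
    _ ≤ α * d := hfar
    _ ≤ α * (β * dist (s j) (s i)) := by
        gcongr
        exact hd.trans (by gcongr; exact infDistFirst_le_dist _ hij)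
    _ = α * β * dist (s j) (s i) := by ring

lemma exists_dist_le_kCenterCost {V U : Finset X} (hV : V.Nonempty) (hU : U.Nonempty) {v : X}
    (hv : v ∈ V) : ∃ u ∈ U, dist v u ≤ kCenterCost V hV U := by
  obtain ⟨u, hu, hmin⟩ := (hU.to_set.image (fun u => dist v u)).csInf_mem
    (U.finite_toSet.image _)
  exact ⟨u, hu, hmin.trans_le (le_sup' (fun v => sInf ((fun u => dist v u) '' (U : Set X))) hv)⟩

lemma exists_kCenterCost_eq_sInf (V : Finset X) (hV : V.Nonempty) {k : ℕ} (hk : k ≤ V.card) :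
    ∃ U ⊆ V, U.card = k ∧ kCenterCost V hV U =
      sInf {r : ℝ | ∃ U : Finset X, U ⊆ V ∧ U.card = k ∧ r = kCenterCost V hV U} := by
  set costs := {r : ℝ | ∃ U : Finset X, U ⊆ V ∧ U.card = k ∧ r = kCenterCost V hV U}
  obtain ⟨U₀, hU₀V, hU₀k⟩ := exists_subset_card_eq hk
  have hne : costs.Nonempty := ⟨_, U₀, hU₀V, hU₀k, rfl⟩
  have hfin : costs.Finite :=
    (V.powerset.finite_toSet.image (kCenterCost V hV)).subset
      (by rintro _ ⟨U, hUV, -, rfl⟩; exact ⟨U, by simpa using hUV, rfl⟩)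
  obtain ⟨U, hUV, hUk, hU⟩ := hne.csInf_mem hfin
  exact ⟨U, hUV, hUk, hU.symm⟩

lemma exists_lt_dist_le_two_mul_of_card_le (U : Finset X) (g : ℕ → X) {k : ℕ} {R : ℝ}
    (hU : U.card ≤ k) (hcover : ∀ i ≤ k, ∃ u ∈ U, dist (g i) u ≤ R) :
    ∃ i j, i < j ∧ j ≤ k ∧ dist (g j) (g i) ≤ 2 * R := by
  have : Nonempty X := ⟨g 0⟩
  choose! c hcU hc using hcover
  have hcard : U.card < (range (k + 1)).card := by rw [card_range]; omega
  obtain ⟨i, hi, j, hj, hij, hcij⟩ := exists_ne_map_eq_of_card_lt_of_maps_to hcard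
    fun i hi => hcU i (Nat.lt_succ_iff.mp (mem_range.mp hi))
  rw [mem_range, Nat.lt_succ_iff] at hi hj
  have hdist : dist (g i) (g j) ≤ 2 * R :=
    calc dist (g i) (g j) ≤ dist (g i) (c i) + dist (g j) (c j) := by
          rw [hcij]; exact dist_triangle_right _ _ _
      _ ≤ 2 * R := by linarith [hc i hi, hc j hj]
  rcases hij.lt_or_gt with hlt | hlt
  · exact ⟨i, j, hlt, hj, dist_comm (g j) (g i) ▸ hdist⟩
  · exact ⟨j, i, hlt, hi, hdist⟩

end

theorem stmt_4_general {X : Type*} [MetricSpace X] (V : Finset X) (hV : V.Nonempty)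
    (k : ℕ) (hk1 : 1 ≤ k) (hk2 : k ≤ V.card)
    (OPT : ℝ)
    (hOPT : OPT = sInf {r : ℝ | ∃ U : Finset X, U ⊆ V ∧ U.card = k ∧
      r = V.sup' hV (fun v => sInf ((fun u => dist v u) '' (U : Set X)))})
    (α β : ℝ) (hα : 1 ≤ α) (hβ : 1 ≤ β)
    (s : ℕ → X) (hsV : ∀ t < k, s t ∈ V)
    (π : ℕ → X → X)
    (hassign : ∀ t, 1 ≤ t → t ≤ k → ∀ v ∈ V,
      dist v (π t v) ≤ β * sInf ((fun i => dist v (s i)) '' {i : ℕ | i < t}))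
    (hfarthest : ∀ t, 1 ≤ t → t < k →
      dist (s t) (π t (s t)) ≥
        (1 / α) * V.sup' hV (fun v => sInf ((fun i => dist v (s i)) '' {i : ℕ | i < t}))) :
    V.sup' hV (fun v => dist v (π k v)) ≤ 2 * α * β ^ 2 * OPT := by
  have hα0 : 0 < α := zero_lt_one.trans_le hα
  have hβ0 : 0 ≤ β := zero_le_one.trans hβ
  obtain ⟨U, -, hUk, hUopt⟩ := exists_kCenterCost_eq_sInf V hV hk2
  have hcover : ∀ w ∈ V, ∃ u ∈ U, dist w u ≤ OPT := fun w hw =>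
    hOPT.trans hUopt.symm ▸ exists_dist_le_kCenterCost hV (card_pos.mp (hUk ▸ hk1)) hw
  set r := V.sup' hV (infDistFirst s k)
  obtain ⟨v, hvV, hrv⟩ := exists_mem_eq_sup' hV (infDistFirst s k)
  have hsep : ∀ i j, i < j → j ≤ k →
      r ≤ α * β * dist (Function.update s k v j) (Function.update s k v i) := by
    intro i j hij hjk
    rw [Function.update_of_ne (hij.trans_le hjk).ne]
    rcases hjk.lt_or_eq with hjk | rfl
    · rw [Function.update_of_ne hjk.ne]
      exact sup'_infDistFirst_le_of_farthest V hV s hα0 hβ0 hij hjk.le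
        (hassign j (by omega) hjk.le (s j) (hsV j hjk)) (hfarthest j (by omega) hjk)
    · rw [Function.update_self]
      exact hrv.trans_le <| (infDistFirst_le_dist v hij).trans
        (le_mul_of_one_le_left dist_nonneg (one_le_mul_of_one_le_of_one_le hα hβ))
  have hcover_update : ∀ i ≤ k, ∃ u ∈ U, dist (Function.update s k v i) u ≤ OPT := by
    intro i hi
    rcases hi.lt_or_eq with hi | rfl
    · simpa [Function.update_of_ne hi.ne] using hcover _ (hsV i hi)
    · simpa using hcover v hvV
  obtain ⟨i, j, hij, hjk, hd⟩ := exists_lt_dist_le_two_mul_of_card_le U _ hUk.le hcover_update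
  calc V.sup' hV (fun v => dist v (π k v))
      ≤ β * r := sup'_le _ _ fun w hw =>
        (hassign k hk1 le_rfl w hw).trans (by gcongr; exact le_sup' (infDistFirst s k) hw)
    _ ≤ β * (α * β * (2 * OPT)) := by
        gcongr
        exact (hsep i j hij hjk).trans (by gcongr)
    _ = 2 * α * β ^ 2 * OPT := by ring

/-- **Greedy k-center with approximate subroutines (Lemma 6 / Theorem 5 framework).**
`OPT` is the optimal k-center objective over center sets `U ⊆ V` with `|U| = k`.
Centers `s 0, …, s (k-1)` are distinct points of `V`; for each `t ∈ {1, …, k}`,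
`π t` assigns every point of `V` to one of the first `t` centers with distance at most
`β` times the distance to the nearest of those centers, and for each `t ∈ {1, …, k-1}`
the next center `s t` has assigned distance at least `1/α` times the maximum over `V`
of the distance to the nearest of the first `t` centers. Then the final assignment is
a `2·α·β²`-approximation of `OPT`. -/
theorem stmt_4 {X : Type*} [MetricSpace X] (V : Finset X) (hV : V.Nonempty)
    (k : ℕ) (hk1 : 1 ≤ k) (hk2 : k ≤ V.card)
    (OPT : ℝ)
    (hOPT : OPT = sInf {r : ℝ | ∃ U : Finset X, U ⊆ V ∧ U.card = k ∧
      r = V.sup' hV (fun v => sInf ((fun u => dist v u) '' (U : Set X)))})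
    (α β : ℝ) (hα : 1 ≤ α) (hβ : 1 ≤ β)
    (s : ℕ → X) (hsV : ∀ t < k, s t ∈ V)
    (hs_distinct : ∀ i < k, ∀ j < k, i ≠ j → s i ≠ s j)
    (π : ℕ → X → X)
    (hπ_mem : ∀ t, 1 ≤ t → t ≤ k → ∀ v ∈ V, ∃ i < t, π t v = s i)
    (hassign : ∀ t, 1 ≤ t → t ≤ k → ∀ v ∈ V,
      dist v (π t v) ≤ β * sInf ((fun i => dist v (s i)) '' {i : ℕ | i < t}))
    (hfarthest : ∀ t, 1 ≤ t → t < k →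
      dist (s t) (π t (s t)) ≥
        (1 / α) * V.sup' hV (fun v => sInf ((fun i => dist v (s i)) '' {i : ℕ | i < t}))) :
    V.sup' hV (fun v => dist v (π k v)) ≤ 2 * α * β ^ 2 * OPT :=
  stmt_4_general V hV k hk1 hk2 OPT hOPT α β hα hβ s hsV π hassign hfarthest
end

section
/- Let (X,d) be a metric space, let v_i, s_i, v_j, s_j ∈ X and r ≥ 0 with d(s_i, v_i) < d(s_j, v_j) − 4r. Let A, B ⊆ X be finite sets with d(s_i, x) ≤ 2r for all x ∈ A and d(s_j, y) ≤ 2r for all y ∈ B, and suppose |A|·|B| ≥ 12·ln(n/δ) for some integer n ≥ 1 and δ ∈ (0,1). Let p ≤ 0.4 and let (B_{x,y})_{(x,y) ∈ A×B} be independent Boolean random variables with ℙ(B_{x,y} = true) ≥ 1 − p for each pair, where B_{x,y} = true represents a correct (Yes) answer to the query O(v_i,x,v_j,y). Let FCount = |{(x,y) ∈ A×B : B_{x,y} = true}|. Then ℙ(FCount ≥ 0.3·|A|·|B|) ≥ 1 − δ/n². -/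
/-!
The number of correctly answered queries is a sum of `N = |A|·|B|` independent indicators,
each of mean at least `1 - p ≥ 0.6`. Falling to `0.3·N` is thus a deviation of at least `0.3·N`
below the mean, which by Hoeffding's inequality has probability at most
`exp (-2 (0.3 N)² / N) = exp (-0.18 N) ≤ exp (-2 ln (n/δ)) = δ²/n² ≤ δ/n²`.
-/

open MeasureTheory ProbabilityTheory Finset Real

theorem Finset.card_filter_univ_coe_sort {α : Type*} (s : Finset α) (q : α → Prop)
    [DecidablePred q] : #{i : s | q i} = #(s.filter q) := by
  simp only [card_filter]
  exact sum_coe_sort s fun i => if q i then 1 else 0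

/-- Hoeffding's inequality for the number of successes among independent Bernoulli trials. -/
theorem measureReal_card_filter_le_sub_le {ι Ω : Type*} [Fintype ι] [MeasurableSpace Ω]
    {P : Measure Ω} [IsProbabilityMeasure P] {b : ι → Ω → Bool}
    (hmeas : ∀ i, Measurable (b i)) (hindep : iIndepFun b P) {q : ℝ}
    (hq : ∀ i, q ≤ P.real {ω | b i ω = true}) {ε : ℝ} (hε : 0 ≤ ε) :
    P.real {ω | (#{i | b i ω = true} : ℝ) ≤ q * Fintype.card ι - ε} ≤
      exp (-2 * ε ^ 2 / Fintype.card ι) := by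
  set Y : ι → Ω → ℝ := fun i => {ω | b i ω = true}.indicator 1
  have hY_meas (i : ι) : Measurable (Y i) :=
    measurable_one.indicator (hmeas i (measurableSet_singleton true))
  have hY_mean (i : ι) : P[Y i] = P.real {ω | b i ω = true} :=
    integral_indicator_one (hmeas i (measurableSet_singleton true))
  have hY_mem (i : ι) (ω : Ω) : Y i ω ∈ Set.Icc 0 1 := by
    by_cases h : b i ω <;> simp [Y, h]
  have hsubG (i : ι) : HasSubgaussianMGF (-fun ω => Y i ω - P[Y i]) (1 / 4) P := by
    convert (hasSubgaussianMGF_of_mem_Icc (μ := P) (hY_meas i).aemeasurable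
      (ae_of_all _ (hY_mem i))).neg
    norm_num
  have hindep_centered : iIndepFun (fun i => -fun ω => Y i ω - P[Y i]) P := by
    convert hindep.comp (fun i (x : Bool) => -((if x then 1 else 0 : ℝ) - P[Y i]))
      (fun _ => measurable_from_top) using 2 with i
    ext ω
    by_cases h : b i ω <;> simp [Y, h]
  have hoeffding := HasSubgaussianMGF.measure_sum_ge_le_of_iIndepFun hindep_centered
    (s := univ) (fun i _ => hsubG i) hε
  refine le_trans (measureReal_mono fun ω hω => ?_) (hoeffding.trans_eq ?_)
  · have hcount : ∑ i, Y i ω = #{i | b i ω = true} := by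
      simp [Y, Set.indicator_apply, sum_boole]
    have hmean : q * Fintype.card ι ≤ ∑ i, P[Y i] := by
      simpa [hY_mean, mul_comm] using sum_le_sum fun i (_ : i ∈ univ) => hq i
    simp only [Set.mem_ofPred_eq, Pi.neg_apply, neg_sub, sum_sub_distrib, hcount] at hω ⊢
    linarith
  · simp only [one_div, sum_const, card_univ, nsmul_eq_mul, NNReal.coe_mul,
      NNReal.coe_natCast, NNReal.coe_inv, NNReal.coe_ofNat, neg_mul, exp_eq_exp]
    ring

theorem exp_neg_le_div_sq {n : ℕ} (hn : 1 ≤ n) {δ c : ℝ} (hδ : δ ∈ Set.Ioo 0 1)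
    (hc : 2 * log (n / δ) ≤ c) : exp (-c) ≤ δ / n ^ 2 := by
  have hn' : (0 : ℝ) < n := by exact_mod_cast hn
  calc exp (-c) ≤ exp (2 * log (δ / n)) :=
        exp_le_exp.2 (by rw [← inv_div, log_inv]; linarith)
    _ = (δ / n) ^ 2 := by
        rw [show (2 : ℝ) = ((2 : ℕ) : ℝ) by norm_num, ← log_pow,
          exp_log (by have := hδ.1; positivity)]
    _ ≤ δ / n ^ 2 := by
        rw [div_pow]
        gcongr
        exact sq_le hδ.1.le hδ.2.le

theorem stmt_9_general {X : Type*} (A B : Finset X)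
    (n : ℕ) (hn : 1 ≤ n) (δ : ℝ) (hδ : δ ∈ Set.Ioo (0 : ℝ) 1)
    (hcard : 12 * Real.log (n / δ) ≤ (A.card : ℝ) * (B.card : ℝ))
    (p : ℝ) (hp : p ≤ 0.4)
    {Ω : Type*} [MeasurableSpace Ω] (P : Measure Ω) [IsProbabilityMeasure P]
    (Bq : X → X → Ω → Bool) (hmeas : ∀ x y, Measurable (Bq x y))
    (hindep : iIndepFun
      (fun xy : (A ×ˢ B : Finset (X × X)) => Bq (xy : X × X).1 (xy : X × X).2) P)
    (hcorrect : ∀ x ∈ A, ∀ y ∈ B, 1 - p ≤ (P {ω | Bq x y ω = true}).toReal) :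
    1 - δ / (n : ℝ) ^ 2 ≤
      (P {ω | 0.3 * ((A.card : ℝ) * (B.card : ℝ)) ≤
        (((A ×ˢ B).filter (fun xy => Bq xy.1 xy.2 ω = true)).card : ℝ)}).toReal := by
  set N : ℝ := (#A : ℝ) * #B
  have hlog : 0 < log (n / δ) :=
    log_pos ((one_lt_div hδ.1).2 (hδ.2.trans_le (by exact_mod_cast hn)))
  have hN : 0 < N := by linarith
  have htail := measureReal_card_filter_le_sub_le (P := P) (fun _ => hmeas _ _) hindep
    (q := 1 - p) (fun xy => hcorrect _ (mem_product.1 xy.2).1 _ (mem_product.1 xy.2).2)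
    (ε := 0.3 * N) (by positivity)
  simp only [Fintype.card_coe, card_product, Nat.cast_mul,
    fun ω => card_filter_univ_coe_sort (A ×ˢ B) fun xy => Bq xy.1 xy.2 ω = true] at htail
  have hsmall : exp (-2 * (0.3 * N) ^ 2 / N) ≤ δ / n ^ 2 := by
    rw [neg_mul, neg_div]
    exact exp_neg_le_div_sq hn hδ (by rw [le_div_iff₀ hN]; nlinarith)
  have hcover : Set.univ ⊆
      {ω | 0.3 * N ≤ #((A ×ˢ B).filter fun xy => Bq xy.1 xy.2 ω = true)} ∪
      {ω | #((A ×ˢ B).filter fun xy => Bq xy.1 xy.2 ω = true) ≤ (1 - p) * N - 0.3 * N} := by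
    intro ω _
    rcases le_or_gt (0.3 * N) #((A ×ˢ B).filter fun xy => Bq xy.1 xy.2 ω = true) with h | h
    · exact Or.inl h
    · exact Or.inr (by simp only [Set.mem_ofPred_eq]; nlinarith)
  rw [← measureReal_def]
  linarith [probReal_univ (μ := P),
    (measureReal_mono (μ := P) hcover).trans (measureReal_union_le _ _)]

/-- **ClusterComp guarantee (Lemma, probabilistic noise).**
`A` and `B` are cores of the clusters of `s_i` and `s_j` (within distance `2r` of the
respective centers) and `d(s_i,v_i) < d(s_j,v_j) − 4r`, so the correct answer to each
query `O(v_i, x, v_j, y)` is Yes. Each query is answered correctly (event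
`Bq (x,y) = true`), independently, with probability at least `1 − p` where `p ≤ 0.4`.
If `|A|·|B| ≥ 12·ln(n/δ)`, then `FCount ≥ 0.3·|A|·|B|` with probability at least
`1 − δ/n²`. -/
theorem stmt_9 {X : Type*} [MetricSpace X] (vi si vj sj : X) (r : ℝ) (hr : 0 ≤ r)
    (hsep : dist si vi < dist sj vj - 4 * r)
    (A B : Finset X)
    (hA : ∀ x ∈ A, dist si x ≤ 2 * r) (hB : ∀ y ∈ B, dist sj y ≤ 2 * r)
    (n : ℕ) (hn : 1 ≤ n) (δ : ℝ) (hδ : δ ∈ Set.Ioo (0 : ℝ) 1)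
    (hcard : 12 * Real.log (n / δ) ≤ (A.card : ℝ) * (B.card : ℝ))
    (p : ℝ) (hp : p ≤ 0.4)
    {Ω : Type*} [MeasurableSpace Ω] (P : Measure Ω) [IsProbabilityMeasure P]
    (Bq : X → X → Ω → Bool) (hmeas : ∀ x y, Measurable (Bq x y))
    (hindep : iIndepFun
      (fun xy : (A ×ˢ B : Finset (X × X)) => Bq (xy : X × X).1 (xy : X × X).2) P)
    (hcorrect : ∀ x ∈ A, ∀ y ∈ B, 1 - p ≤ (P {ω | Bq x y ω = true}).toReal) :
    1 - δ / (n : ℝ) ^ 2 ≤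
      (P {ω | 0.3 * ((A.card : ℝ) * (B.card : ℝ)) ≤
        (((A ×ˢ B).filter (fun xy => Bq xy.1 xy.2 ω = true)).card : ℝ)}).toReal :=
  stmt_9_general A B n hn δ hδ hcard p hp P Bq hmeas hindep hcorrect
end

section
/- Let (X,d) be a metric space, let u, s_i, s_j ∈ X and r ≥ 0 with d(u, s_i) ≤ d(u, s_j) − 2r. Let R ⊆ X be a finite set with d(s_i, x) ≤ 2r for all x ∈ R, and |R| ≥ 12·ln(n/δ) for some integer n ≥ 1 and δ ∈ (0,1). Let p ≤ 0.4 and let (B_x)_{x ∈ R} be independent Boolean random variables with ℙ(B_x = true) ≥ 1 − p, where B_x = true represents a correct (Yes) answer to the query O(u,x,u,s_j). Let ACount = |{x ∈ R : B_x = true}|. Then ℙ(ACount ≥ 0.3·|R|) ≥ 1 − δ/n². -/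
open MeasureTheory ProbabilityTheory

/-- **Robust assignment score (Lemma, probabilistic noise).**
`R` is the core of the cluster of `s_i` (points within distance `2r` of `s_i`) and
`d(u,s_i) ≤ d(u,s_j) − 2r`, so the correct answer to each query `O(u, x, u, s_j)` is
Yes. Each query is answered correctly (event `B x = true`), independently, with
probability at least `1 − p` where `p ≤ 0.4`. If `|R| ≥ 12·ln(n/δ)`, then
`ACount = |{x ∈ R : B x = true}| ≥ 0.3·|R|` with probability at least `1 − δ/n²`. -/
theorem stmt_10 {X : Type*} [MetricSpace X] (u si sj : X) (r : ℝ) (hr : 0 ≤ r)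
    (hsep : dist u si ≤ dist u sj - 2 * r)
    (R : Finset X) (hR : ∀ x ∈ R, dist si x ≤ 2 * r)
    (n : ℕ) (hn : 1 ≤ n) (δ : ℝ) (hδ : δ ∈ Set.Ioo (0 : ℝ) 1)
    (hcard : 12 * Real.log (n / δ) ≤ (R.card : ℝ))
    (p : ℝ) (hp : p ≤ 0.4)
    {Ω : Type*} [MeasurableSpace Ω] (P : Measure Ω) [IsProbabilityMeasure P]
    (B : X → Ω → Bool) (hmeas : ∀ x, Measurable (B x))
    (hindep : iIndepFun (fun x : R => B x) P)
    (hcorrect : ∀ x ∈ R, 1 - p ≤ (P {ω | B x ω = true}).toReal) :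
    1 - δ / (n : ℝ) ^ 2 ≤
      (P {ω | 0.3 * (R.card : ℝ) ≤ ((R.filter (fun x => B x ω = true)).card : ℝ)}).toReal := by
  classical
  set m : ℕ := R.card with hm
  -- failure indicators
  set Y : R → Ω → ℝ := fun i ω => if B i ω then 0 else 1 with hY
  have hYmeas : ∀ i : R, Measurable (Y i) := fun i =>
    (Measurable.of_discrete (f := fun b : Bool => if b then (0:ℝ) else 1)).comp (hmeas i)
  have hYindep : iIndepFun Y P := by
    have := hindep.comp (fun _ (b : Bool) => if b then (0:ℝ) else 1)
      (fun _ => Measurable.of_discrete)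
    exact this
  set F : Ω → ℝ := ∑ i : R, Y i with hF
  have hFeq : ∀ ω, F ω = ∑ i : R, Y i ω := fun ω => by simp [hF]
  have hFmeas : Measurable F := by
    have h : F = fun ω => ∑ i : R, Y i ω := funext hFeq
    rw [h]
    exact Finset.measurable_sum _ fun i _ => hYmeas i
  -- pointwise facts
  have hsum : ∀ ω, ((R.filter (fun x => B x ω = true)).card : ℝ) + F ω = m := by
    intro ω
    have h1 : ((R.filter (fun x => B x ω = true)).card : ℝ)
        = ∑ x ∈ R, (if B x ω = true then (1:ℝ) else 0) := by
      rw [Finset.sum_boole]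
    have h2 : F ω = ∑ x ∈ R, (if B x ω = true then (0:ℝ) else 1) := by
      simp only [hF, Finset.sum_apply]
      rw [← Finset.sum_coe_sort R (fun x => if B x ω = true then (0:ℝ) else 1)]
    rw [h1, h2, ← Finset.sum_add_distrib]
    have : ∀ x ∈ R, ((if B x ω = true then (1:ℝ) else 0) + (if B x ω = true then (0:ℝ) else 1)) = 1 := by
      intro x _; by_cases h : B x ω = true <;> simp [h]
    rw [Finset.sum_congr rfl this]
    simp [hm]
  have hF0 : ∀ ω, 0 ≤ F ω := by
    intro ω
    rw [hFeq ω]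
    apply Finset.sum_nonneg
    intro i _
    by_cases h : B i ω <;> simp [hY, h]
  have hFm : ∀ ω, F ω ≤ m := by
    intro ω
    have := hsum ω
    linarith [show (0:ℝ) ≤ ((R.filter (fun x => B x ω = true)).card : ℝ) from Nat.cast_nonneg _]
  -- integrability of exp (1 * F)
  have hint : Integrable (fun ω => Real.exp (1 * F ω)) P := by
    apply Integrable.mono' (integrable_const (Real.exp m))
    · exact (hFmeas.const_mul 1).exp.aestronglyMeasurable
    · refine Filter.Eventually.of_forall fun ω => ?_
      rw [Real.norm_eq_abs, abs_of_pos (Real.exp_pos _), one_mul]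
      exact Real.exp_le_exp.mpr (hFm ω)
  -- mgf of each Y i at t = 1
  have hmgf : ∀ i : R, mgf (Y i) P 1 ≤ 0.6 + 0.4 * Real.exp 1 := by
    intro i
    have hs : MeasurableSet {ω | B i ω = true} := (hmeas i) (measurableSet_singleton true)
    set q : ℝ := (P {ω | B (i:X) ω = true}).toReal with hq
    have hq1 : q ≤ 1 := by
      rw [hq]
      exact ENNReal.toReal_le_of_le_ofReal one_pos.le (by simpa using prob_le_one)
    have hq06 : 0.6 ≤ q := by
      have := hcorrect i i.2
      linarith
    have key : (fun ω => Real.exp (1 * Y i ω))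
        = fun ω => Real.exp 1 + (1 - Real.exp 1) * Set.indicator {ω | B (i:X) ω = true} (fun _ => (1:ℝ)) ω := by
      funext ω
      by_cases h : B i ω = true
      · simp [hY, h, Set.indicator_of_mem, Set.mem_setOf_eq]
      · simp [hY, h, Set.indicator_of_notMem, Set.mem_setOf_eq]
    have hindint : Integrable (Set.indicator {ω | B (i:X) ω = true} (fun _ => (1:ℝ))) P :=
      (integrable_const (1:ℝ)).indicator hs
    have : mgf (Y i) P 1 = Real.exp 1 + (1 - Real.exp 1) * q := by
      rw [mgf, key]
      rw [integral_add (integrable_const _) (hindint.const_mul _)]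
      rw [integral_const, integral_const_mul, integral_indicator_const _ hs]
      simp [hq, smul_eq_mul, measureReal_def]
    rw [this]
    nlinarith [Real.exp_pos 1, Real.add_one_le_exp 1]
  -- mgf of sum
  have hmgfF : mgf F P 1 ≤ (0.6 + 0.4 * Real.exp 1) ^ m := by
    rw [hF, hYindep.mgf_sum hYmeas]
    calc ∏ i : R, mgf (Y i) P 1 ≤ ∏ _i : R, (0.6 + 0.4 * Real.exp 1) :=
          Finset.prod_le_prod (fun i _ => mgf_nonneg) (fun i _ => hmgf i)
      _ = (0.6 + 0.4 * Real.exp 1) ^ m := by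
          rw [Finset.prod_const, Finset.card_univ, Fintype.card_coe]
  -- numeric bound: 0.6 + 0.4 e ≤ exp (8/15)
  have hnum : (0.6 + 0.4 * Real.exp 1) ≤ Real.exp (8/15) := by
    have h1 : Real.exp (8/15) = Real.exp (1/60) ^ (32:ℕ) := by
      rw [← Real.exp_nat_mul]; norm_num
    have h2 : (61/60 : ℝ) ≤ Real.exp (1/60) := by
      have := Real.add_one_le_exp (1/60 : ℝ); linarith
    have h3 : ((61:ℝ)/60) ^ (32:ℕ) ≤ Real.exp (1/60) ^ (32:ℕ) := by
      apply pow_le_pow_left₀ (by norm_num) h2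
    have h4 : Real.exp 1 < 2.7182818286 := Real.exp_one_lt_d9
    rw [h1]
    calc (0.6 + 0.4 * Real.exp 1) ≤ 0.6 + 0.4 * 2.7182818286 := by linarith
      _ ≤ ((61:ℝ)/60) ^ (32:ℕ) := by norm_num
      _ ≤ _ := h3
  -- Chernoff
  have hcher : (P {ω | 0.7 * (m:ℝ) ≤ F ω}).toReal ≤ Real.exp (-(m:ℝ)/6) := by
    have := measure_ge_le_exp_mul_mgf (μ := P) (X := F) (0.7 * m) zero_le_one hint
    have hb : Real.exp (-1 * (0.7 * m)) * mgf F P 1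
        ≤ Real.exp (-1 * (0.7 * m)) * (0.6 + 0.4 * Real.exp 1) ^ m :=
      mul_le_mul_of_nonneg_left hmgfF (Real.exp_pos _).le
    have hc : Real.exp (-1 * (0.7 * m)) * (0.6 + 0.4 * Real.exp 1) ^ m
        ≤ Real.exp (-1 * (0.7 * m)) * Real.exp (8/15) ^ m := by
      apply mul_le_mul_of_nonneg_left _ (Real.exp_pos _).le
      apply pow_le_pow_left₀ _ hnum
      positivity
    have hd : Real.exp (-1 * (0.7 * m)) * Real.exp (8/15) ^ m = Real.exp (-(m:ℝ)/6) := by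
      rw [← Real.exp_nat_mul, ← Real.exp_add]
      ring_nf
    rw [measureReal_def] at this
    linarith
  -- exp(-m/6) ≤ δ/n²
  have hnpos : (0:ℝ) < n := by exact_mod_cast hn
  have hδ0 : (0:ℝ) < δ := hδ.1
  have hδ1 : δ < 1 := hδ.2
  have hratio : (0:ℝ) < (n:ℝ)/δ := by positivity
  have htail : Real.exp (-(m:ℝ)/6) ≤ δ / (n:ℝ)^2 := by
    have h1 : -(m:ℝ)/6 ≤ -2 * Real.log ((n:ℝ)/δ) := by linarith
    have h2 : Real.exp (-2 * Real.log ((n:ℝ)/δ)) = (δ/(n:ℝ))^2 := by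
      rw [mul_comm, Real.exp_mul, Real.exp_log hratio]
      rw [show ((n:ℝ)/δ) ^ (-2:ℝ) = (((n:ℝ)/δ) ^ (2:ℕ) : ℝ)⁻¹ by
        rw [← Real.rpow_natCast ((n:ℝ)/δ) 2, ← Real.rpow_neg hratio.le]; norm_num]
      rw [div_pow, div_pow]
      field_simp
    calc Real.exp (-(m:ℝ)/6) ≤ Real.exp (-2 * Real.log ((n:ℝ)/δ)) := Real.exp_le_exp.mpr h1
      _ = (δ/(n:ℝ))^2 := h2
      _ = δ^2/(n:ℝ)^2 := by rw [div_pow]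
      _ ≤ δ / (n:ℝ)^2 := by
          apply div_le_div_of_nonneg_right _ (by positivity)
          nlinarith
  -- complement set inclusion
  set A : Set Ω := {ω | 0.3 * (R.card : ℝ) ≤ ((R.filter (fun x => B x ω = true)).card : ℝ)} with hA
  have hsub : Aᶜ ⊆ {ω | 0.7 * (m:ℝ) ≤ F ω} := by
    intro ω hω
    simp only [hA, Set.mem_compl_iff, Set.mem_setOf_eq, not_le] at hω
    have := hsum ω
    simp only [Set.mem_setOf_eq]
    linarith
  have hbadlt : (P Aᶜ).toReal ≤ δ / (n:ℝ)^2 := by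
    calc (P Aᶜ).toReal ≤ (P {ω | 0.7 * (m:ℝ) ≤ F ω}).toReal := by
          apply ENNReal.toReal_mono (measure_ne_top _ _) (measure_mono hsub)
      _ ≤ Real.exp (-(m:ℝ)/6) := hcher
      _ ≤ δ / (n:ℝ)^2 := htail
  have huniv : (1:ℝ) ≤ (P A).toReal + (P Aᶜ).toReal := by
    have h2 : P Set.univ ≤ P A + P Aᶜ := by
      rw [← Set.union_compl_self A]
      exact measure_union_le _ _
    have h3 : ((P A + P Aᶜ).toReal) = (P A).toReal + (P Aᶜ).toReal :=
      ENNReal.toReal_add (measure_ne_top _ _) (measure_ne_top _ _)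
    have h4 : (P Set.univ).toReal ≤ (P A + P Aᶜ).toReal :=
      ENNReal.toReal_mono (ENNReal.add_ne_top.mpr ⟨measure_ne_top _ _, measure_ne_top _ _⟩) h2
    simp only [measure_univ, ENNReal.toReal_one] at h4
    linarith [h3 ▸ h4]
  linarith
end

section
/- Let (X,d) be a metric space, C ⊆ X a nonempty finite set with designated center s ∈ X, p ≤ 0.4, n ≥ 1 an integer, and δ ∈ (0, 1/2]. Let u₁, u₂ ∈ C with d(u₁,s) ≤ d(u₂,s), and suppose |{x ∈ C : d(u₁,s) ≤ d(x,s) < d(u₂,s)}| ≥ √(100·|C|·ln(n/δ)). For i = 1,2 let Count(u_i) = Σ_{x ∈ C} B_{x,u_i}, where all the random variables B_{x,u_i} (over x ∈ C and i ∈ {1,2}) are mutually independent {0,1}-valued, with ℙ(B_{x,u_i} = 1) = 1 − p if d(x,s) ≥ d(u_i,s) and ℙ(B_{x,u_i} = 1) = p if d(x,s) < d(u_i,s). Then ℙ(Count(u₁) > Count(u₂)) ≥ 1 − δ/n². -/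
/-!
Write `S = Count(u₁) - Count(u₂) = ∑_{x,i} σᵢ B_{x,uᵢ}` with signs `σ₁ = 1`, `σ₂ = -1`: a signed sum
of `2|C|` independent Bernoulli variables. For a point `x`, the two success probabilities agree
unless `x` lies between `u₁` and `u₂`, where they differ by `1 - 2p`; hence `𝔼 S = (1 - 2p) g`, with
`g` the number of such points. Hoeffding's inequality bounds `ℙ(S ≤ 0)` by
`exp (-((1 - 2p) g)² / |C|)`, and since `1 - 2p ≥ 1/5` and `g² ≥ 100 |C| ln(n/δ)` this is at most
`exp (-4 ln (n/δ)) = (δ/n)⁴ ≤ δ/n²`.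
-/

open MeasureTheory ProbabilityTheory Finset Real

section Hoeffding

variable {Ω : Type*} [MeasurableSpace Ω] {P : Measure Ω} [IsProbabilityMeasure P]

theorem measureReal_sum_mul_le_sub_le_of_mem_Icc {ι : Type*} [Fintype ι]
    {X : ι → Ω → ℝ} (hindep : iIndepFun X P) (hX_meas : ∀ i, AEMeasurable (X i) P)
    (hX : ∀ i, ∀ᵐ ω ∂P, X i ω ∈ Set.Icc (0 : ℝ) 1) (σ : ι → ℝ) {ε : ℝ} (hε : 0 ≤ ε) :
    P.real {ω | ∑ i, σ i * X i ω ≤ ∑ i, σ i * P[X i] - ε} ≤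
      exp (-2 * ε ^ 2 / ∑ i, σ i ^ 2) := by
  set W : ι → Ω → ℝ := fun i ω ↦ -σ i * (X i ω - P[X i])
  have hW_indep : iIndepFun W P :=
    hindep.comp (fun i (y : ℝ) ↦ -σ i * (y - ∫ ω, X i ω ∂P)) fun i ↦ by fun_prop
  have hW : ∀ i ∈ univ, HasSubgaussianMGF (W i) ((‖σ i‖₊ / 2) ^ 2) P := by
    intro i _
    convert (hasSubgaussianMGF_of_mem_Icc (hX_meas i) (hX i)).const_mul (-σ i) using 1
    ext
    -- `const_mul` states its parameter with an anonymous subtype that `simp` does not unfold.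
    change _ = (-σ i) ^ 2 * ((‖(1 : ℝ) - 0‖₊ / 2 : NNReal) : ℝ) ^ 2
    norm_num [div_pow, div_eq_mul_one_div (σ i ^ 2)]
  have hsum ω : ∑ i, W i ω = ∑ i, σ i * P[X i] - ∑ i, σ i * X i ω := by
    simp only [W, ← sum_sub_distrib]
    exact sum_congr rfl fun i _ ↦ by ring
  calc P.real {ω | ∑ i, σ i * X i ω ≤ ∑ i, σ i * P[X i] - ε}
      = P.real {ω | ε ≤ ∑ i, W i ω} := by
        congr 1 with ω
        simp only [Set.mem_ofPred_eq, hsum]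
        constructor <;> intro h <;> linarith
    _ ≤ _ := HasSubgaussianMGF.measure_sum_ge_le_of_iIndepFun hW_indep hW hε
    _ = _ := by
      simp only [NNReal.coe_sum, NNReal.coe_pow, NNReal.coe_div, coe_nnnorm, Real.norm_eq_abs,
        sq_abs, div_pow, NNReal.coe_ofNat, ← sum_div]
      congr 1
      ring

theorem measureReal_sum_mul_boole_le_sub_le {ι : Type*} [Fintype ι] {b : ι → Ω → Bool}
    (hb : ∀ i, Measurable (b i)) (hindep : iIndepFun b P) (σ : ι → ℝ) {ε : ℝ} (hε : 0 ≤ ε) :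
    P.real {ω | ∑ i, σ i * (if b i ω then 1 else 0) ≤
        ∑ i, σ i * P.real {ω | b i ω} - ε} ≤
      exp (-2 * ε ^ 2 / ∑ i, σ i ^ 2) := by
  have hX_meas i : Measurable fun ω ↦ if b i ω then (1 : ℝ) else 0 :=
    (Measurable.of_discrete (f := fun x : Bool ↦ if x then (1 : ℝ) else 0)).comp (hb i)
  have hmean i : P[fun ω ↦ if b i ω then (1 : ℝ) else 0] = P.real {ω | b i ω} := by
    have hs : MeasurableSet {ω | b i ω} := hb i (measurableSet_singleton true)
    rw [← integral_indicator_one hs]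
    congr 1 with ω
    simp [Set.indicator_apply]
  have := measureReal_sum_mul_le_sub_le_of_mem_Icc
    (hindep.comp (fun _ x ↦ if x then (1 : ℝ) else 0) fun _ ↦ .of_discrete)
    (fun i ↦ (hX_meas i).aemeasurable)
    (fun i ↦ ae_of_all _ fun ω ↦ by simp only [Function.comp_apply]; split_ifs <;> simp) σ hε
  simpa only [Function.comp_def, hmean] using this

theorem one_sub_measureReal_le_of_forall_or {q r : Ω → Prop} (h : ∀ ω, q ω ∨ r ω) :
    1 - P.real {ω | r ω} ≤ P.real {ω | q ω} := by
  have := (probReal_univ (μ := P)).symm.le.trans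
    ((measureReal_mono fun ω _ ↦ h ω).trans (measureReal_union_le {ω | q ω} {ω | r ω}))
  linarith

end Hoeffding

theorem sum_prod_fin_two_sign_mul {α β : Type*} (C : Finset α) (f : α → β → ℝ) (u₁ u₂ : β) :
    ∑ i : C × Fin 2, (if i.2 = 0 then 1 else -1) * f i.1 (if i.2 = 0 then u₁ else u₂) =
      ∑ x ∈ C, (f x u₁ - f x u₂) := by
  simp [Fintype.sum_prod_type, Fin.sum_univ_two, sub_eq_add_neg,
    sum_attach C (fun x ↦ f x u₁ + -f x u₂)]

theorem sum_prod_fin_two_sign_sq (α : Type*) [Fintype α] :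
    ∑ i : α × Fin 2, (if i.2 = 0 then (1 : ℝ) else -1) ^ 2 = 2 * Fintype.card α := by
  simp [mul_comm]

theorem sum_sub_ite_le_eq_mul_card_filter {α : Type*} (C : Finset α) (d : α → ℝ) {a b : ℝ}
    (hab : a ≤ b) (p : ℝ) :
    ∑ x ∈ C, ((if a ≤ d x then 1 - p else p) - (if b ≤ d x then 1 - p else p)) =
      (1 - 2 * p) * #(C.filter fun x ↦ a ≤ d x ∧ d x < b) := by
  rw [natCast_card_filter, mul_sum]
  refine sum_congr rfl fun x _ ↦ ?_
  split_ifs <;> grind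

theorem exp_neg_four_mul_log_div_le {δ n : ℝ} (hδ0 : 0 < δ) (hδ1 : δ ≤ 1) (hn : 1 ≤ n) :
    exp (-(4 * log (n / δ))) ≤ δ / n ^ 2 := by
  have hn0 : 0 < n := by linarith
  calc exp (-(4 * log (n / δ))) = (δ / n) ^ 4 := by
        rw [show -(4 * log (n / δ)) = ((4 : ℕ) : ℝ) * log (δ / n) by
            rw [← inv_div, log_inv]; push_cast; ring, ← log_pow, exp_log (by positivity)]
    _ ≤ δ / n ^ 2 := by
        rw [div_pow, div_le_div_iff₀ (by positivity) (by positivity)]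
        have : δ ^ 3 ≤ n ^ 2 := by
          nlinarith [pow_le_one₀ hδ0.le hδ1 (n := 3), one_le_pow₀ hn (n := 2)]
        nlinarith [mul_nonneg (mul_nonneg (sq_nonneg n) hδ0.le) (sub_nonneg.mpr this)]

theorem exp_neg_sq_div_le_of_sqrt_le {p K g δ n : ℝ} (hp : p ≤ 2 / 5) (hK : 0 < K)
    (hg : √(100 * K * log (n / δ)) ≤ g) (hδ0 : 0 < δ) (hδ1 : δ ≤ 1) (hn : 1 ≤ n) :
    exp (-2 * ((1 - 2 * p) * g) ^ 2 / (2 * K)) ≤ δ / n ^ 2 := by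
  obtain ⟨hg0, hg2⟩ := sqrt_le_iff.mp hg
  refine le_trans (exp_le_exp.mpr ?_) (exp_neg_four_mul_log_div_le hδ0 hδ1 hn)
  rw [show -2 * ((1 - 2 * p) * g) ^ 2 / (2 * K) = -(((1 - 2 * p) * g) ^ 2 / K) by field_simp,
    neg_le_neg_iff, le_div_iff₀ hK]
  have : (1 / 5) ^ 2 * g ^ 2 ≤ ((1 - 2 * p) * g) ^ 2 := by
    rw [mul_pow]; gcongr; linarith
  nlinarith

theorem stmt_12_general {X : Type*} [MetricSpace X] (C : Finset X) (hC : C.Nonempty) (s : X)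
    (p : ℝ) (hp : p ≤ 0.4)
    (n : ℕ) (hn : 1 ≤ n) (δ : ℝ) (hδ : δ ∈ Set.Ioc (0 : ℝ) (1 / 2))
    (u₁ u₂ : X) (h12 : dist u₁ s ≤ dist u₂ s)
    (hgap : Real.sqrt (100 * (C.card : ℝ) * Real.log (n / δ)) ≤
      ((C.filter (fun x => dist u₁ s ≤ dist x s ∧ dist x s < dist u₂ s)).card : ℝ))
    {Ω : Type*} [MeasurableSpace Ω] (P : Measure Ω) [IsProbabilityMeasure P]
    (B : X → X → Ω → Bool) (hmeas : ∀ x u, Measurable (B x u))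
    (hindep : iIndepFun
      (fun xi : C × Fin 2 => B (xi.1 : X) (if xi.2 = 0 then u₁ else u₂)) P)
    (hdist : ∀ u ∈ ({u₁, u₂} : Set X), ∀ x ∈ C,
      (P {ω | B x u ω = true}).toReal = if dist u s ≤ dist x s then 1 - p else p) :
    1 - δ / (n : ℝ) ^ 2 ≤
      (P {ω | (C.filter (fun x => B x u₂ ω = true)).card <
        (C.filter (fun x => B x u₁ ω = true)).card}).toReal := by
  obtain ⟨hδ0, hδ1⟩ := hδ
  norm_num at hp
  set g := #(C.filter fun x ↦ dist u₁ s ≤ dist x s ∧ dist x s < dist u₂ s)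
  set σ : C × Fin 2 → ℝ := fun i ↦ if i.2 = 0 then 1 else -1
  have hdiff ω : ∑ i, σ i * (if B i.1 (if i.2 = 0 then u₁ else u₂) ω then 1 else 0) =
      (#(C.filter fun x ↦ B x u₁ ω) : ℝ) - #(C.filter fun x ↦ B x u₂ ω) := by
    rw [natCast_card_filter, natCast_card_filter, ← sum_sub_distrib]
    exact sum_prod_fin_two_sign_mul C (fun x u ↦ if B x u ω then 1 else 0) u₁ u₂
  have hmean : ∑ i, σ i * P.real {ω | B i.1 (if i.2 = 0 then u₁ else u₂) ω} =
      (1 - 2 * p) * g := by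
    refine (sum_prod_fin_two_sign_mul C (fun x u ↦ P.real {ω | B x u ω}) u₁ u₂).trans ?_
    refine (sum_congr rfl fun x hx ↦ ?_).trans
      (sum_sub_ite_le_eq_mul_card_filter C (dist · s) h12 p)
    rw [measureReal_def, measureReal_def, hdist u₁ (by simp) x hx, hdist u₂ (by simp) x hx]
  have hbad := measureReal_sum_mul_boole_le_sub_le (fun i ↦ hmeas _ _) hindep σ
    (ε := (1 - 2 * p) * g) (mul_nonneg (by linarith) g.cast_nonneg)
  rw [hmean, sub_self, sum_prod_fin_two_sign_sq, Fintype.card_coe] at hbad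
  have htail := exp_neg_sq_div_le_of_sqrt_le (p := p) (by linarith)
    (by exact_mod_cast hC.card_pos) hgap hδ0 (by linarith) (by exact_mod_cast hn : (1 : ℝ) ≤ n)
  have hcover ω : #(C.filter fun x ↦ B x u₂ ω) < #(C.filter fun x ↦ B x u₁ ω) ∨
      ∑ i, σ i * (if B i.1 (if i.2 = 0 then u₁ else u₂) ω then 1 else 0) ≤ 0 := by
    rw [hdiff, sub_nonpos]
    exact_mod_cast lt_or_ge _ _
  change _ ≤ P.real _
  linarith [one_sub_measureReal_le_of_forall_or (P := P) hcover]

/-- **Count-score separation for core identification (Lemma, probabilistic noise).**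
For `u ∈ {u₁, u₂} ⊆ C`, `Count u = Σ_{x ∈ C} B_{x,u}` where all the Boolean random
variables `B_{x,u_i}` (over `x ∈ C`, `i ∈ {1,2}`) are mutually independent with success
probability `1 − p` if `d(x,s) ≥ d(u,s)` and `p` otherwise, `p ≤ 0.4`. If
`d(u₁,s) ≤ d(u₂,s)` and at least `√(100·|C|·ln(n/δ))` points of `C` lie between them
in distance from `s`, then `Count u₁ > Count u₂` with probability at least `1 − δ/n²`. -/
theorem stmt_12 {X : Type*} [MetricSpace X] (C : Finset X) (hC : C.Nonempty) (s : X)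
    (p : ℝ) (hp : p ≤ 0.4)
    (n : ℕ) (hn : 1 ≤ n) (δ : ℝ) (hδ : δ ∈ Set.Ioc (0 : ℝ) (1 / 2))
    (u₁ u₂ : X) (hu₁ : u₁ ∈ C) (hu₂ : u₂ ∈ C) (h12 : dist u₁ s ≤ dist u₂ s)
    (hgap : Real.sqrt (100 * (C.card : ℝ) * Real.log (n / δ)) ≤
      ((C.filter (fun x => dist u₁ s ≤ dist x s ∧ dist x s < dist u₂ s)).card : ℝ))
    {Ω : Type*} [MeasurableSpace Ω] (P : Measure Ω) [IsProbabilityMeasure P]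
    (B : X → X → Ω → Bool) (hmeas : ∀ x u, Measurable (B x u))
    (hindep : iIndepFun
      (fun xi : C × Fin 2 => B (xi.1 : X) (if xi.2 = 0 then u₁ else u₂)) P)
    (hdist : ∀ u ∈ ({u₁, u₂} : Set X), ∀ x ∈ C,
      (P {ω | B x u ω = true}).toReal = if dist u s ≤ dist x s then 1 - p else p) :
    1 - δ / (n : ℝ) ^ 2 ≤
      (P {ω | (C.filter (fun x => B x u₂ ω = true)).card <
        (C.filter (fun x => B x u₁ ω = true)).card}).toReal :=
  stmt_12_general C hC s p hp n hn δ hδ u₁ u₂ h12 hgap P B hmeas hindep hdist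
end

section
/- Let (X,d) be a metric space, u ∈ X a query point, V ⊆ X a nonempty finite set, and α ≥ 0. Let g : V × V → Bool be any function such that g(v,w) = true whenever d(u,v) < d(u,w) − 2α and g(v,w) = false whenever d(u,v) > d(u,w) + 2α (g may be arbitrary when |d(u,v) − d(u,w)| ≤ 2α). For v ∈ V define Count(v) = |{w ∈ V \ {v} : g(v,w) = false}|. Then every v* ∈ V that maximizes Count over V satisfies d(u, v*) ≥ max_{v ∈ V} d(u,v) − 4α. -/
/-- **Count-Max under additive adversarial noise (farthest point).**
The comparator `g` is correct whenever the two compared distances from the query point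
`u` differ by more than `2α` (`g v w = true` means `v` is declared closer to `u` than
`w`). With `Count v = |{w ∈ V \ {v} : g v w = false}|`, every maximizer `v*` of `Count`
satisfies `d(u, v*) ≥ max_{v ∈ V} d(u, v) − 4α`. -/
theorem stmt_13 {X : Type*} [MetricSpace X] [DecidableEq X]
    (u : X) (V : Finset X) (hV : V.Nonempty) (α : ℝ) (hα : 0 ≤ α)
    (g : X → X → Bool)
    (hg_true : ∀ v ∈ V, ∀ w ∈ V, dist u v < dist u w - 2 * α → g v w = true)
    (hg_false : ∀ v ∈ V, ∀ w ∈ V, dist u w + 2 * α < dist u v → g v w = false)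
    (vstar : X) (hstar : vstar ∈ V)
    (hmax : ∀ v ∈ V,
      ((V.erase v).filter (fun w => g v w = false)).card ≤
        ((V.erase vstar).filter (fun w => g vstar w = false)).card) :
    V.sup' hV (fun v => dist u v) - 4 * α ≤ dist u vstar := by
  by_contra h
  push_neg at h
  obtain ⟨vm, hvm, hvmd⟩ := Finset.exists_mem_eq_sup' hV (fun v => dist u v)
  set M := V.sup' hV (fun v => dist u v) with hM
  -- every w counted by vstar satisfies dist u w < M - 2α
  have hdvs : dist u vstar < M - 4 * α := by linarith
  have key : ∀ w ∈ (V.erase vstar).filter (fun w => g vstar w = false),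
      dist u w ≤ dist u vstar + 2 * α := by
    intro w hw
    simp only [Finset.mem_filter, Finset.mem_erase] at hw
    by_contra hc
    push_neg at hc
    have := hg_true vstar hstar w hw.1.2 (by linarith)
    rw [this] at hw
    simp at hw
  -- the counted set for vstar, with vstar inserted, is inside the counted set for vm
  have hsub : insert vstar ((V.erase vstar).filter (fun w => g vstar w = false)) ⊆
      (V.erase vm).filter (fun w => g vm w = false) := by
    intro w hw
    simp only [Finset.mem_insert, Finset.mem_filter, Finset.mem_erase] at hw ⊢
    rcases hw with rfl | hw
    · have hne : w ≠ vm := by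
        intro h'; rw [h', ← hvmd] at hdvs; linarith
      exact ⟨⟨hne, hstar⟩, hg_false vm hvm w hstar (by rw [← hvmd]; linarith)⟩
    · have hw2 := key w (by simp only [Finset.mem_filter, Finset.mem_erase]; exact hw)
      have hne : w ≠ vm := by
        intro h'; rw [h'] at hw2; rw [← hvmd] at hw2; linarith
      exact ⟨⟨hne, hw.1.2⟩, hg_false vm hvm w hw.1.2 (by rw [← hvmd]; linarith)⟩
  have hnotmem : vstar ∉ (V.erase vstar).filter (fun w => g vstar w = false) := by
    simp
  have hcard := Finset.card_le_card hsub
  rw [Finset.card_insert_of_notMem hnotmem] at hcard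
  have := hmax vm hvm
  omega
end

section
/- Let v₁ > v₂ > … > v_n be distinct real values (so v₁ is the maximum), let p ≤ 0.4, δ ∈ (0,1), and let r be an index with r − 1 ≥ 5·√(2·n·ln(2/δ)). For each unordered pair {i,j} with i ≠ j, let E_{ij} be independent Bernoulli random variables with ℙ(E_{ij} = 1) = p (the comparison of v_i and v_j is answered incorrectly), and for each i define Count(v_i) = |{j ≠ i : the (possibly erroneous) comparison declares v_j < v_i}| = Σ_{j ≠ i} 1{(v_j < v_i) XOR (E_{ij} = 1)}. Then ℙ(Count(v₁) > Count(v_r)) ≥ 1 − δ. -/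
/-!
Write `E_q` for the error indicator of the pair `q = (i, j)`, `i < j`. Counting the pairs through
`0` and through `r` shows `Count (v 0) - Count (v r) = r - ∑_q w_q E_q` for explicit weights
`w_q ∈ {-1, 0, 1, 2}` with `∑ w_q = 2r` and `∑ w_q² = 2n`. The weighted sum has mean `2pr`, so the
maximum can only lose if `∑ w_q (E_q - p) ≥ (1 - 2p) r ≥ r / 5`. By Hoeffding's inequality this
has probability at most `exp (-2 (r/5)² / (2n)) = exp (-r² / (25 n)) ≤ (δ/2)² ≤ δ`.
-/

open MeasureTheory ProbabilityTheory Finset Real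

section Probability

variable {Ω ι : Type*} [MeasurableSpace Ω] {μ : Measure Ω} [IsProbabilityMeasure μ]

lemma hasSubgaussianMGF_mul_boole_sub {B : Ω → Bool} (hB : Measurable B) (c : ℝ) {p : ℝ}
    (hp : μ.real {ω | B ω = true} = p) :
    HasSubgaussianMGF (fun ω ↦ c * ((if B ω then 1 else 0) - p)) ((‖c‖₊ / 2) ^ 2) μ := by
  have hs : MeasurableSet {ω | B ω = true} := hB (measurableSet_singleton true)
  set X : Ω → ℝ := fun ω ↦ c * if B ω then 1 else 0
  have hX : X = {ω | B ω = true}.indicator fun _ ↦ c := by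
    ext ω; by_cases h : B ω <;> simp [X, h]
  have hmean : μ[X] = c * p := by
    rw [hX, integral_indicator_const _ hs, hp, smul_eq_mul, mul_comm]
  have hsub := hasSubgaussianMGF_of_mem_Icc (μ := μ) (X := X) (a := min 0 c) (b := max 0 c)
    (by rw [hX]; exact (measurable_const.indicator hs).aemeasurable)
    (ae_of_all _ fun ω ↦ by by_cases h : B ω <;> simp [X, h])
  have hwidth : ‖max 0 c - min 0 c‖₊ = ‖c‖₊ := by
    rw [max_sub_min_eq_abs', zero_sub, abs_neg]; exact nnnorm_abs c
  rw [hwidth, hmean] at hsub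
  convert hsub using 2 with ω
  simp only [X]; ring

lemma measureReal_sum_mul_boole_sub_ge_le [Fintype ι] {B : ι → Ω → Bool}
    (hB : ∀ i, Measurable (B i)) (hindep : iIndepFun B μ) {p : ι → ℝ}
    (hp : ∀ i, μ.real {ω | B i ω = true} = p i) (c : ι → ℝ) {ε : ℝ} (hε : 0 ≤ ε) :
    μ.real {ω | ε ≤ ∑ i, c i * ((if B i ω then 1 else 0) - p i)}
      ≤ exp (-2 * ε ^ 2 / ∑ i, c i ^ 2) := by
  have hindep' : iIndepFun (fun i ω ↦ c i * ((if B i ω then 1 else 0) - p i)) μ :=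
    hindep.comp (fun i b ↦ c i * ((if b then 1 else 0) - p i)) fun i ↦ measurable_from_top
  have h := HasSubgaussianMGF.measure_sum_ge_le_of_iIndepFun hindep' (s := univ)
    (fun i _ ↦ hasSubgaussianMGF_mul_boole_sub (hB i) (c i) (hp i)) hε
  have hpar : ((∑ i, (‖c i‖₊ / 2) ^ 2 : NNReal) : ℝ) = (∑ i, c i ^ 2) / 4 := by
    push_cast
    rw [sum_div]
    congr 1 with i
    rw [Real.norm_eq_abs, div_pow, sq_abs]
    norm_num
  rw [hpar] at h
  convert h using 2
  ring

lemma one_sub_measureReal_le_of_compl_subset {s t : Set Ω} (hts : tᶜ ⊆ s) :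
    1 - μ.real t ≤ μ.real s := by
  have hunion := measureReal_union_le (μ := μ) t tᶜ
  rw [Set.union_compl_self, probReal_univ] at hunion
  linarith [measureReal_mono (μ := μ) hts]

end Probability

section Pairs

variable {n : ℕ}

lemma sum_pairs_eq_sum_prod (f : Fin n × Fin n → ℝ) :
    ∑ q : {q : Fin n × Fin n // q.1 < q.2}, f q
      = ∑ i, ∑ j, if i < j then f (i, j) else 0 := by
  rw [← Finset.sum_subtype {q | q.1 < q.2} (by simp) f, sum_filter, Fintype.sum_prod_type]

lemma sum_pairs_ite_fst (i : Fin n) (g : Fin n × Fin n → ℝ) :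
    ∑ q : {q : Fin n × Fin n // q.1 < q.2}, (if q.1.1 = i then g q else 0)
      = ∑ j ∈ Ioi i, g (i, j) := by
  rw [sum_pairs_eq_sum_prod fun q ↦ if q.1 = i then g q else 0,
    Fintype.sum_eq_single i fun a ha ↦ by simp [ha], ← filter_lt_eq_Ioi, sum_filter]
  simp

lemma sum_pairs_ite_snd (i : Fin n) (g : Fin n × Fin n → ℝ) :
    ∑ q : {q : Fin n × Fin n // q.1 < q.2}, (if q.1.2 = i then g q else 0)
      = ∑ j ∈ Iio i, g (j, i) := by
  rw [sum_pairs_eq_sum_prod fun q ↦ if q.2 = i then g q else 0, sum_comm,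
    Fintype.sum_eq_single i fun a ha ↦ by simp [ha], ← filter_gt_eq_Iio, sum_filter]
  simp

end Pairs

section NoisyCount

variable {n : ℕ}

noncomputable def noisyCount (v : Fin n → ℝ) (e : Fin n → Fin n → Bool) (i : Fin n) : ℕ :=
  #{j ∈ univ.erase i | decide (v j < v i) ≠ e i j}

lemma noisyCount_of_strictAnti {v : Fin n → ℝ} (hv : StrictAnti v) (e : Fin n → Fin n → Bool)
    (i : Fin n) :
    noisyCount v e i = #{j ∈ Iio i | e i j = true} + #{j ∈ Ioi i | e i j = false} := by
  have hsplit : univ.erase i = Iio i ∪ Ioi i := by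
    ext j
    simp only [mem_erase, mem_univ, and_true, mem_union, mem_Iio, mem_Ioi]
    exact ne_iff_lt_or_gt
  rw [noisyCount, hsplit, filter_union, card_union_of_disjoint
    (disjoint_filter_filter (disjoint_Ioi_Iio i).symm)]
  congr 1
  · refine congrArg card (filter_congr fun j hj ↦ ?_)
    simp [(hv (mem_Iio.mp hj)).not_gt]
  · refine congrArg card (filter_congr fun j hj ↦ ?_)
    simp [hv (mem_Ioi.mp hj)]

/-- The error on the pair `q` lowers `Count (v 0) - Count (v r)` by `countGapWeight r q`; the pair
`(0, r)` enters both counts and gets weight `2`. -/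
def countGapWeight (r : Fin (n + 1)) (q : Fin (n + 1) × Fin (n + 1)) : ℝ :=
  (if q.1 = 0 then 1 else 0) + (if q.2 = r then 1 else 0) - (if q.1 = r then 1 else 0)

lemma sum_countGapWeight_mul (r : Fin (n + 1)) (g : Fin (n + 1) × Fin (n + 1) → ℝ) :
    ∑ q : {q : Fin (n + 1) × Fin (n + 1) // q.1 < q.2}, countGapWeight r q * g q
      = ∑ j ∈ Ioi 0, g (0, j) + ∑ j ∈ Iio r, g (j, r) - ∑ j ∈ Ioi r, g (r, j) := by
  simp only [countGapWeight, add_mul, sub_mul, ite_mul, one_mul, zero_mul, sum_add_distrib,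
    sum_sub_distrib, sum_pairs_ite_fst, sum_pairs_ite_snd]

lemma sum_countGapWeight (r : Fin (n + 1)) :
    ∑ q : {q : Fin (n + 1) × Fin (n + 1) // q.1 < q.2}, countGapWeight r q = 2 * r := by
  have h := sum_countGapWeight_mul r fun _ ↦ 1
  simp only [mul_one, sum_const, Fin.card_Ioi, Fin.card_Iio, nsmul_eq_mul, Fin.val_zero] at h
  rw [h, Nat.add_sub_cancel, Nat.sub_zero, Nat.cast_sub r.is_le]
  ring

lemma sum_countGapWeight_sq {r : Fin (n + 1)} (hr : r ≠ 0) :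
    ∑ q : {q : Fin (n + 1) × Fin (n + 1) // q.1 < q.2}, countGapWeight r q ^ 2 = 2 * (n + 1) := by
  simp only [sq, sum_countGapWeight_mul]
  have h0 : (0 : Fin (n + 1)) < r := Fin.pos_iff_ne_zero.mpr hr
  have hfst : ∑ j ∈ Ioi 0, countGapWeight r (0, j) = n + 1 := by
    rw [sum_congr rfl fun j _ ↦ show countGapWeight r (0, j) = 1 + if j = r then 1 else 0 by
      simp [countGapWeight, hr.symm]]
    simp [sum_add_distrib, hr]
  have hsnd : ∑ j ∈ Iio r, countGapWeight r (j, r) = r + 1 := by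
    rw [sum_congr rfl fun j hj ↦ show countGapWeight r (j, r) = 1 + if j = 0 then 1 else 0 by
      simp [countGapWeight, (mem_Iio.mp hj).ne]; ring]
    simp [sum_add_distrib, h0]
  have hthd : ∑ j ∈ Ioi r, countGapWeight r (r, j) = -(n - r) := by
    rw [sum_congr rfl fun j hj ↦ show countGapWeight r (r, j) = -1 by
      simp [countGapWeight, hr, (mem_Ioi.mp hj).ne']]
    simp [Nat.cast_sub r.is_le]
  rw [hfst, hsnd, hthd]
  ring

lemma card_filter_true_add_card_filter_false {α : Type*} (s : Finset α) (f : α → Bool) :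
    #{a ∈ s | f a = true} + #{a ∈ s | f a = false} = #s := by
  simpa using card_filter_add_card_filter_not (s := s) (fun a ↦ f a = true)

lemma noisyCount_zero_sub_noisyCount {v : Fin (n + 1) → ℝ} (hv : StrictAnti v)
    {e : Fin (n + 1) → Fin (n + 1) → Bool} (he : ∀ i j, e i j = e j i) (r : Fin (n + 1)) :
    (noisyCount v e 0 : ℝ) - noisyCount v e r
      = r - ∑ q : {q : Fin (n + 1) × Fin (n + 1) // q.1 < q.2},
          countGapWeight r q * if e q.1.1 q.1.2 then 1 else 0 := by
  have h0 := card_filter_true_add_card_filter_false (Ioi 0) (e 0)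
  have hr := card_filter_true_add_card_filter_false (Ioi r) (e r)
  simp only [Fin.card_Ioi, Nat.add_sub_cancel, Fin.val_zero, Nat.sub_zero] at h0 hr
  have h0' : (#{a ∈ Ioi 0 | e 0 a = true} : ℝ) + #{a ∈ Ioi 0 | e 0 a = false} = n := by
    exact_mod_cast h0
  have hr' : (#{a ∈ Ioi r | e r a = true} : ℝ) + #{a ∈ Ioi r | e r a = false} = n - r := by
    rw [← Nat.cast_sub r.is_le, ← hr, Nat.cast_add]
  rw [sum_countGapWeight_mul r fun q ↦ if e q.1 q.2 then 1 else 0, noisyCount_of_strictAnti hv,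
    noisyCount_of_strictAnti hv]
  have hIio : Iio (0 : Fin (n + 1)) = ∅ := by ext; simp
  simp only [sum_boole, he _ r, hIio, filter_empty, card_empty, Nat.cast_add, Nat.cast_zero]
  linarith

lemma noisyCount_lt_noisyCount_zero {v : Fin (n + 1) → ℝ} (hv : StrictAnti v)
    {e : Fin (n + 1) → Fin (n + 1) → Bool} (he : ∀ i j, e i j = e j i) (p : ℝ) (r : Fin (n + 1))
    (h : ∑ q : {q : Fin (n + 1) × Fin (n + 1) // q.1 < q.2},
      countGapWeight r q * ((if e q.1.1 q.1.2 then 1 else 0) - p) < (1 - 2 * p) * r) :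
    noisyCount v e r < noisyCount v e 0 := by
  have hcenter : ∑ q : {q : Fin (n + 1) × Fin (n + 1) // q.1 < q.2},
        countGapWeight r q * ((if e q.1.1 q.1.2 then 1 else 0) - p)
      = ∑ q : {q : Fin (n + 1) × Fin (n + 1) // q.1 < q.2},
          countGapWeight r q * (if e q.1.1 q.1.2 then 1 else 0) - 2 * r * p := by
    rw [← sum_countGapWeight r, sum_mul, ← sum_sub_distrib]
    simp only [mul_sub]
  have hgap := noisyCount_zero_sub_noisyCount hv he r
  rw [hcenter] at h
  exact_mod_cast (show (noisyCount v e r : ℝ) < noisyCount v e 0 by linarith)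

end NoisyCount

lemma exp_neg_sq_div_le_of_five_mul_sqrt_le {N δ r : ℝ} (hN : 0 < N) (hδ0 : 0 < δ) (hδ2 : δ ≤ 2)
    (hr : 5 * √(2 * N * log (2 / δ)) ≤ r) :
    exp (-2 * (r / 5) ^ 2 / (2 * N)) ≤ δ := by
  set L := log (2 / δ)
  have hL : 0 ≤ L := log_nonneg (by rw [le_div_iff₀ hδ0]; linarith)
  have hr2 : 50 * N * L ≤ r ^ 2 := by
    have h := pow_le_pow_left₀ (by positivity) hr 2
    rw [mul_pow, sq_sqrt (by positivity)] at h
    linarith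
  have hlogδ : log δ = log 2 - L := by
    simp only [L, log_div two_ne_zero hδ0.ne']; ring
  calc exp (-2 * (r / 5) ^ 2 / (2 * N)) ≤ exp (log δ) := by
        gcongr
        rw [div_le_iff₀ (by positivity)]
        nlinarith [log_nonneg one_le_two]
    _ = δ := exp_log hδ0

/-- **Maximum beats low-rank values in noisy Count scores (probabilistic noise).**
`v 0 > v 1 > … > v (n-1)` are distinct values; each unordered pairwise comparison is
flipped independently with probability `p ≤ 0.4` (errors `E` are persistent and
symmetric). `Count (v i)` counts the indices `j ≠ i` that the noisy comparisons declare
smaller than `v i` (the truthful answer `v j < v i` XOR-ed with the error `E i j`). If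
the (0-indexed) rank of `r` satisfies `r ≥ 5·√(2n·ln(2/δ))`, then
`Count (v 0) > Count (v r)` with probability at least `1 − δ`. -/
theorem stmt_15 (n : ℕ) (hn : 0 < n) (v : Fin n → ℝ) (hv : StrictAnti v)
    (p : ℝ) (hp : p ≤ 0.4) (δ : ℝ) (hδ : δ ∈ Set.Ioo (0 : ℝ) 1)
    (r : Fin n) (hr : 5 * Real.sqrt (2 * (n : ℝ) * Real.log (2 / δ)) ≤ (r : ℝ))
    {Ω : Type*} [MeasurableSpace Ω] (P : Measure Ω) [IsProbabilityMeasure P]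
    (E : Fin n → Fin n → Ω → Bool) (hmeas : ∀ i j, Measurable (E i j))
    (hsymm : ∀ i j, E i j = E j i)
    (herr : ∀ i j, i ≠ j → (P {ω | E i j ω = true}).toReal = p)
    (hindep : iIndepFun
      (fun ij : {q : Fin n × Fin n // q.1 < q.2} => E (ij : Fin n × Fin n).1
        (ij : Fin n × Fin n).2) P) :
    1 - δ ≤
      (P {ω |
        ((Finset.univ.erase r).filter
          (fun j => decide (v j < v r) ≠ E r j ω)).card <
        ((Finset.univ.erase (⟨0, hn⟩ : Fin n)).filter
          (fun j => decide (v j < v ⟨0, hn⟩) ≠ E ⟨0, hn⟩ j ω)).card}).toReal := by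
  obtain ⟨m, rfl⟩ : ∃ m, n = m + 1 := ⟨n - 1, by omega⟩
  obtain ⟨hδ0, hδ1⟩ := hδ
  have hr0 : r ≠ 0 := by
    have hL : 0 < log (2 / δ) := log_pos (by rw [lt_div_iff₀ hδ0]; linarith)
    have hrpos : (0 : ℝ) < r := (mul_pos (by norm_num) (sqrt_pos.mpr (by positivity))).trans_le hr
    rintro rfl
    simp at hrpos
  set bad := {ω | (r : ℝ) / 5 ≤ ∑ q : {q : Fin (m + 1) × Fin (m + 1) // q.1 < q.2},
    countGapWeight r q * ((if E q.1.1 q.1.2 ω then 1 else 0) - p)}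
  have hbad : P.real bad ≤ δ := by
    refine (measureReal_sum_mul_boole_sub_ge_le (fun q ↦ hmeas _ _) hindep
      (fun q ↦ herr _ _ q.2.ne) _ (by positivity)).trans ?_
    rw [sum_countGapWeight_sq hr0]
    exact exp_neg_sq_div_le_of_five_mul_sqrt_le (by positivity) hδ0 (by linarith)
      (by exact_mod_cast hr)
  calc 1 - δ ≤ 1 - P.real bad := by linarith
    _ ≤ P.real {ω | noisyCount v (fun i j ↦ E i j ω) r < noisyCount v (fun i j ↦ E i j ω) 0} :=
      one_sub_measureReal_le_of_compl_subset fun ω hω ↦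
        noisyCount_lt_noisyCount_zero hv (fun i j ↦ by rw [hsymm]) p r <|
          (not_le.mp (Set.notMem_ofPred_iff.mp hω)).trans_le
            (show (r : ℝ) / 5 ≤ (1 - 2 * p) * r by nlinarith [Nat.cast_nonneg (α := ℝ) r])
end

section
/- Let l ≥ 1 and m ≥ 1 be integers, let V be a finite set with |V| = l·m, let v ∈ V be a fixed element, and let C ⊆ V \ {v} with |C| ≤ l/2. Partition V uniformly at random into l blocks of size m each (i.e., take a uniformly random bijection φ : V → Fin l × Fin m and let the blocks be the preimages φ⁻¹({i} × Fin m)). Then the probability that the block containing v contains no element of C is at least 1/2. -/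
/-!
Fix `c ≠ v`. Precomposing with the transposition of `c` and `c'` shows that the number
`B` of bijections putting `c` in the block of `v` does not depend on `c ≠ v`. Every
bijection puts exactly `m - 1` elements besides `v` in the block of `v`, so double
counting gives `(l m - 1) B = (m - 1) N` with `N` the number of all bijections, hence
`l B ≤ N`. A union bound over `C` bounds the bad bijections by `|C| N / l ≤ N / 2`.
-/

open Finset

namespace RandomPartition

variable {V ι κ : Type*} [Fintype V] [DecidableEq V] [Fintype ι] [DecidableEq ι] [Fintype κ]

theorem card_filter_fst_eq (i : ι) :
    #(univ.filter fun p : ι × κ => p.1 = i) = Fintype.card κ := by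
  rw [show (univ.filter fun p : ι × κ => p.1 = i) = {i} ×ˢ univ by ext ⟨j, k⟩; simp [eq_comm]]
  simp

theorem card_filter_fst_apply_eq_erase (φ : V ≃ ι × κ) (v : V) :
    #((univ.erase v).filter fun x => (φ x).1 = (φ v).1) = Fintype.card κ - 1 := by
  have hblock : #(univ.filter fun x => (φ x).1 = (φ v).1) = Fintype.card κ := by
    rw [← card_filter_fst_eq (φ v).1]
    exact card_equiv φ (by simp)
  rw [filter_erase, card_erase_of_mem (by simp), hblock]

variable [DecidableEq κ]

def sameBlock (v x : V) : Finset (V ≃ ι × κ) :=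
  univ.filter fun φ => (φ x).1 = (φ v).1

theorem card_sameBlock_eq {v c c' : V} (hc : c ≠ v) (hc' : c' ≠ v) :
    #(sameBlock (ι := ι) (κ := κ) v c) = #(sameBlock (ι := ι) (κ := κ) v c') := by
  refine card_equiv (Equiv.equivCongr (Equiv.swap c c') (Equiv.refl _)) fun φ => ?_
  simp [sameBlock, Equiv.swap_apply_of_ne_of_ne hc.symm hc'.symm]

theorem sum_card_sameBlock (v : V) :
    ∑ x ∈ univ.erase v, #(sameBlock (ι := ι) (κ := κ) v x)
      = Fintype.card (V ≃ ι × κ) * (Fintype.card κ - 1) := by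
  have hcount := sum_card_bipartiteAbove_eq_sum_card_bipartiteBelow
    (fun (x : V) (φ : V ≃ ι × κ) => (φ x).1 = (φ v).1) (s := univ.erase v) (t := univ)
  simp only [bipartiteAbove, bipartiteBelow, card_filter_fst_apply_eq_erase] at hcount
  rw [← card_univ, ← smul_eq_mul, ← sum_const, ← hcount]
  rfl

theorem card_sameBlock_mul {v c : V} (hc : c ≠ v) :
    #(sameBlock (ι := ι) (κ := κ) v c) * (Fintype.card V - 1)
      = Fintype.card (V ≃ ι × κ) * (Fintype.card κ - 1) := by
  rw [← sum_card_sameBlock v, sum_congr rfl fun x hx => card_sameBlock_eq (ne_of_mem_erase hx) hc,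
    sum_const, card_erase_of_mem (mem_univ v), card_univ, smul_eq_mul, mul_comm]

theorem card_mul_card_sameBlock_le (hcard : Fintype.card V = Fintype.card ι * Fintype.card κ)
    {v c : V} (hc : c ≠ v) :
    Fintype.card ι * #(sameBlock (ι := ι) (κ := κ) v c) ≤ Fintype.card (V ≃ ι × κ) := by
  have htwo : 1 < Fintype.card V := Fintype.one_lt_card_iff.mpr ⟨c, v, hc⟩
  have hblocks : Fintype.card ι * (Fintype.card κ - 1) ≤ Fintype.card V - 1 := by
    rw [hcard, Nat.mul_sub_one]
    rcases Nat.eq_zero_or_pos (Fintype.card ι) with h | h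
    · simp [h]
    · omega
  refine Nat.le_of_mul_le_mul_right (c := Fintype.card V - 1) ?_ (by omega)
  calc Fintype.card ι * #(sameBlock v c) * (Fintype.card V - 1)
      = Fintype.card (V ≃ ι × κ) * (Fintype.card ι * (Fintype.card κ - 1)) := by
        rw [mul_assoc, card_sameBlock_mul hc]; ring
    _ ≤ Fintype.card (V ≃ ι × κ) * (Fintype.card V - 1) := Nat.mul_le_mul_left _ hblocks

theorem card_mul_card_filter_exists_sameBlock_le
    (hcard : Fintype.card V = Fintype.card ι * Fintype.card κ) {v : V} {C : Finset V}
    (hvC : v ∉ C) :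
    Fintype.card ι * #(univ.filter fun φ : V ≃ ι × κ => ∃ c ∈ C, (φ c).1 = (φ v).1)
      ≤ #C * Fintype.card (V ≃ ι × κ) := by
  have hunion : (univ.filter fun φ : V ≃ ι × κ => ∃ c ∈ C, (φ c).1 = (φ v).1)
      ⊆ C.biUnion (sameBlock v) := by
    intro φ
    simp [sameBlock]
  calc Fintype.card ι * #(univ.filter fun φ : V ≃ ι × κ => ∃ c ∈ C, (φ c).1 = (φ v).1)
      ≤ Fintype.card ι * ∑ c ∈ C, #(sameBlock (ι := ι) (κ := κ) v c) :=
        Nat.mul_le_mul_left _ ((card_le_card hunion).trans card_biUnion_le)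
    _ = ∑ c ∈ C, Fintype.card ι * #(sameBlock (ι := ι) (κ := κ) v c) := mul_sum _ _ _
    _ ≤ ∑ _c ∈ C, Fintype.card (V ≃ ι × κ) :=
        sum_le_sum fun c hc => card_mul_card_sameBlock_le hcard (ne_of_mem_of_not_mem hc hvC)
    _ = #C * Fintype.card (V ≃ ι × κ) := by rw [sum_const, smul_eq_mul]

end RandomPartition

open RandomPartition in
theorem stmt_18_general (l m : ℕ) (hl : 1 ≤ l)
    {V : Type*} [Fintype V] [DecidableEq V] (hcard : Fintype.card V = l * m)
    (v : V) (C : Finset V) (hvC : v ∉ C) (hC : (C.card : ℝ) ≤ (l : ℝ) / 2) :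
    (1 : ℝ) / 2 ≤
      ((Finset.univ.filter
          (fun φ : V ≃ Fin l × Fin m => ∀ c ∈ C, (φ c).1 ≠ (φ v).1)).card : ℝ) /
        (Fintype.card (V ≃ Fin l × Fin m) : ℝ) := by
  have hcard' : Fintype.card V = Fintype.card (Fin l) * Fintype.card (Fin m) := by simpa
  have hN : 0 < Fintype.card (V ≃ Fin l × Fin m) :=
    Fintype.card_pos_iff.mpr (Fintype.card_eq.mp (by simpa using hcard))
  set good := univ.filter fun φ : V ≃ Fin l × Fin m => ∀ c ∈ C, (φ c).1 ≠ (φ v).1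
  set bad := univ.filter fun φ : V ≃ Fin l × Fin m => ∃ c ∈ C, (φ c).1 = (φ v).1
  set N := Fintype.card (V ≃ Fin l × Fin m)
  have hbad : l * #bad ≤ #C * N := by
    simpa using card_mul_card_filter_exists_sameBlock_le hcard' hvC
  have hsplit : #good + #bad = N := by
    simpa using card_filter_add_card_filter_not (s := univ)
      fun φ : V ≃ Fin l × Fin m => ∀ c ∈ C, (φ c).1 ≠ (φ v).1
  have hlpos : (0 : ℝ) < l := by exact_mod_cast hl
  have hbad' : (l : ℝ) * #bad ≤ #C * N := by exact_mod_cast hbad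
  have hsplit' : (#good : ℝ) + #bad = N := by exact_mod_cast hsplit
  rw [le_div_iff₀ (by exact_mod_cast hN)]
  nlinarith

/-- **Random partition avoids the confusion set (Markov step in Tournament-Partition).**
`V` has `l·m` elements, `v ∈ V`, and `C ⊆ V \ {v}` has at most `l/2` elements. A
uniformly random bijection `φ : V ≃ Fin l × Fin m` partitions `V` into `l` blocks of
size `m` (the block of `x` is `(φ x).1`). The probability (fraction of bijections) that
the block containing `v` contains no element of `C` is at least `1/2`. -/
theorem stmt_18 (l m : ℕ) (hl : 1 ≤ l) (hm : 1 ≤ m)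
    {V : Type*} [Fintype V] [DecidableEq V] (hcard : Fintype.card V = l * m)
    (v : V) (C : Finset V) (hvC : v ∉ C) (hC : (C.card : ℝ) ≤ (l : ℝ) / 2) :
    (1 : ℝ) / 2 ≤
      ((Finset.univ.filter
          (fun φ : V ≃ Fin l × Fin m => ∀ c ∈ C, (φ c).1 ≠ (φ v).1)).card : ℝ) /
        (Fintype.card (V ≃ Fin l × Fin m) : ℝ) :=
  stmt_18_general l m hl hcard v C hvC hC
end
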